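/- arXiv:1003.3970 — 2 statements merged into one kernel-verified Lean document; each statement's English description precedes it below -/
import Mathlib

section
/- Let (T, ℓ) be a weighted tree and let i_1, …, i_m be m ≥ 2 distinct leaves of T. Then there exists an m-cycle α in the symmetric group on {1,…,m} such that 2 · d_{i_1…i_m}(T, ℓ) = d_{i_1 i_{α(1)}}(T,ℓ) + d_{i_{α(1)} i_{α²(1)}}(T,ℓ) + … + d_{i_{α^{m-1}(1)} i_{α^m(1)}}(T,ℓ); that is, some cyclic ordering of the m leaves achieves total consecutive-distance exactly twice the m-dissimilarity. -/
/-- The edge set of the unique path between two vertices of a tree. -/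
noncomputable def treePathEdges {V : Type*} [DecidableEq V] (G : SimpleGraph V)
    (hG : G.IsTree) (i j : V) : Finset (Sym2 V) :=
  ((hG.existsUnique_path i j).choose).edges.toFinset

/-- The tree distance between two vertices: the total weight of the unique path. -/
noncomputable def treeDist {V : Type*} [DecidableEq V] (G : SimpleGraph V)
    (hG : G.IsTree) (ℓ : Sym2 V → ℝ) (i j : V) : ℝ :=
  ∑ e ∈ treePathEdges G hG i j, ℓ e

/-- The combinatorial convex hull of a finite set of vertices of a tree: the union of
the edge sets of the paths between all pairs of members. -/
noncomputable def hullEdges {V : Type*} [DecidableEq V] (G : SimpleGraph V)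
    (hG : G.IsTree) (A : Finset V) : Finset (Sym2 V) :=
  A.biUnion fun i => A.biUnion fun j => treePathEdges G hG i j

/-- The dissimilarity of a finite set of vertices of a weighted tree: the total weight
of its combinatorial convex hull. -/
noncomputable def dissim {V : Type*} [DecidableEq V] (G : SimpleGraph V)
    (hG : G.IsTree) (ℓ : Sym2 V → ℝ) (A : Finset V) : ℝ :=
  ∑ e ∈ hullEdges G hG A, ℓ e

/-- A vertex of a graph is a leaf if it has exactly one neighbor. -/
def IsLeaf {V : Type*} (G : SimpleGraph V) (v : V) : Prop :=
  (G.neighborSet v).ncard = 1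

/-!
Choose a cyclic order of the vertices in which the closed walk through the consecutive tree paths
traverses every edge of the convex hull exactly twice; since distances add up over edges, summing
over the hull gives the identity. Such an order is built by inserting the vertices one at a time: a
new vertex `b` goes between consecutive vertices `a`, `α a` whose paths from `b` share no hull edge.
Such a pair exists because, seen from `b`, edges lying on a common path cut off nested sets of
vertices: among the sets cut off by shared hull edges, a largest one would be closed under the
cycle, hence contain every vertex, which is impossible for a hull edge. Writing `P(u, v)` for the
edges of the path from `u` to `v`, the underlying identity is `P(u, v) = P(r, u) ∆ P(r, v)`: an
edge separates `u` from `v` iff it cuts off exactly one of them from `r`.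
-/

open Finset Equiv SimpleGraph
open scoped symmDiff

theorem SimpleGraph.Walk.reachable_deleteEdges_or {V : Type*} {G : SimpleGraph V} {z x : V}
    (p : G.Walk z x) (y : V) :
    (G.deleteEdges {s(x, y)}).Reachable z x ∨ (G.deleteEdges {s(x, y)}).Reachable z y := by
  induction p with
  | nil => exact Or.inl (Reachable.refl _)
  | @cons z z' x hadj _ ih =>
    by_cases hzz' : s(z, z') = s(x, y)
    · rcases Sym2.eq_iff.mp hzz' with ⟨rfl, -⟩ | ⟨rfl, -⟩
      exacts [Or.inl .rfl, Or.inr .rfl]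
    · have hz : (G.deleteEdges {s(x, y)}).Reachable z z' := by
        refine Adj.reachable ?_
        simpa [hzz'] using hadj
      exact ih.imp hz.trans hz.trans

theorem SimpleGraph.Preconnected.reachable_deleteEdges_iff {V : Type*} {G : SimpleGraph V}
    (hG : G.Preconnected) (x y u v : V) :
    (G.deleteEdges {s(x, y)}).Reachable u v ↔
      ((G.deleteEdges {s(x, y)}).Reachable u x ↔ (G.deleteEdges {s(x, y)}).Reachable v x) := by
  obtain ⟨pu⟩ := hG u x
  obtain ⟨pv⟩ := hG v x
  rcases pu.reachable_deleteEdges_or y with hu | hu <;>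
    rcases pv.reachable_deleteEdges_or y with hv | hv <;>
    grind [Reachable.trans, Reachable.symm]

section TreePath

variable {V : Type*} {G : SimpleGraph V} (hG : G.IsTree)

noncomputable def treePath (u v : V) : G.Walk u v := (hG.existsUnique_path u v).choose

theorem treePath_isPath (u v : V) : (treePath hG u v).IsPath :=
  (hG.existsUnique_path u v).choose_spec.1

theorem eq_treePath {u v : V} {p : G.Walk u v} (hp : p.IsPath) : p = treePath hG u v :=
  (hG.existsUnique_path u v).choose_spec.2 p hp

variable [DecidableEq V]

theorem treePathEdges_eq_of_isPath {u v : V} {p : G.Walk u v} (hp : p.IsPath) :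
    treePathEdges G hG u v = p.edges.toFinset := by
  rw [eq_treePath hG hp]
  rfl

theorem mem_treePathEdges_iff_forall_walk {u v : V} {e : Sym2 V} :
    e ∈ treePathEdges G hG u v ↔ ∀ p : G.Walk u v, e ∈ p.edges := by
  refine ⟨fun he p => ?_, fun h => List.mem_toFinset.mpr (h _)⟩
  rw [treePathEdges_eq_of_isPath hG p.bypass_isPath, List.mem_toFinset] at he
  exact p.edges_bypass_subset_edges he

theorem mem_treePathEdges_iff_not_reachable {u v x y : V} :
    s(x, y) ∈ treePathEdges G hG u v ↔ ¬(G.deleteEdges {s(x, y)}).Reachable u v := by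
  rw [mem_treePathEdges_iff_forall_walk, reachable_deleteEdges_iff_exists_walk]
  push Not
  rfl

theorem treePathEdges_eq_symmDiff (w u v : V) :
    treePathEdges G hG u v = treePathEdges G hG w u ∆ treePathEdges G hG w v := by
  ext e
  induction e using Sym2.ind with
  | h x y =>
    have hR := hG.connected.preconnected.reachable_deleteEdges_iff x y
    rw [mem_symmDiff, mem_treePathEdges_iff_not_reachable, mem_treePathEdges_iff_not_reachable,
      mem_treePathEdges_iff_not_reachable, hR u v, hR w u, hR w v]
    tauto

theorem treePathEdges_self (u : V) : treePathEdges G hG u u = ∅ := by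
  simp [treePathEdges_eq_of_isPath hG Walk.IsPath.nil]

theorem treePathEdges_comm (u v : V) : treePathEdges G hG u v = treePathEdges G hG v u := by
  have h := treePathEdges_eq_symmDiff hG u v u
  rwa [treePathEdges_self, ← bot_eq_empty, symmDiff_bot, eq_comm] at h

theorem treePathEdges_of_adj {x y : V} (h : G.Adj x y) :
    treePathEdges G hG x y = {s(x, y)} := by
  have hp : (Walk.cons h .nil).IsPath := Walk.IsPath.nil.cons (by simp [h.ne])
  simp [treePathEdges_eq_of_isPath hG hp]

theorem edges_treePath_prefix {u v x : V} (hx : x ∈ (treePath hG u v).support) :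
    (treePath hG u x).edges <+: (treePath hG u v).edges := by
  rw [← eq_treePath hG ((treePath_isPath hG u v).takeUntil hx)]
  exact (treePath hG u v).edges_takeUntil_prefix_edges hx

theorem treePathEdges_subset_of_mem_support {u v x : V} (hx : x ∈ (treePath hG u v).support) :
    treePathEdges G hG u x ⊆ treePathEdges G hG u v :=
  Multiset.toFinset_subset.mpr (edges_treePath_prefix hG hx).subset

theorem mem_support_treePath_of_mem {u v x : V} {e : Sym2 V} (he : e ∈ treePathEdges G hG u v)
    (hx : x ∈ e) : x ∈ (treePath hG u v).support :=
  Walk.mem_support_of_mem_edges (List.mem_toFinset.mp he) hx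

theorem treePathEdges_subset_or_subset {u v x y : V} (hx : x ∈ (treePath hG u v).support)
    (hy : y ∈ (treePath hG u v).support) :
    treePathEdges G hG u x ⊆ treePathEdges G hG u y ∨
      treePathEdges G hG u y ⊆ treePathEdges G hG u x :=
  (List.prefix_or_prefix_of_prefix (edges_treePath_prefix hG hx)
    (edges_treePath_prefix hG hy)).imp
    (fun h => Multiset.toFinset_subset.mpr h.subset)
    (fun h => Multiset.toFinset_subset.mpr h.subset)

theorem exists_mem_treePathEdges_of_mem_edgeSet (r : V) {e : Sym2 V} (he : e ∈ G.edgeSet) :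
    ∃ y ∈ e, e ∈ treePathEdges G hG r y := by
  induction e using Sym2.ind with
  | h x y =>
    have hxy : s(x, y) ∈ treePathEdges G hG r x ∆ treePathEdges G hG r y := by
      rw [← treePathEdges_eq_symmDiff, treePathEdges_of_adj hG he, mem_singleton]
    rcases mem_symmDiff.mp hxy with ⟨h, -⟩ | ⟨h, -⟩
    exacts [⟨x, Sym2.mem_mk_left x y, h⟩, ⟨y, Sym2.mem_mk_right x y, h⟩]

theorem mem_edgeSet_of_mem_treePathEdges {u v : V} {e : Sym2 V}
    (he : e ∈ treePathEdges G hG u v) : e ∈ G.edgeSet :=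
  (treePath hG u v).edges_subset_edgeSet (List.mem_toFinset.mp he)

theorem forall_mem_treePathEdges_imp_or {r w : V} {e f : Sym2 V}
    (he : e ∈ treePathEdges G hG r w) (hf : f ∈ treePathEdges G hG r w) :
    (∀ v, e ∈ treePathEdges G hG r v → f ∈ treePathEdges G hG r v) ∨
      (∀ v, f ∈ treePathEdges G hG r v → e ∈ treePathEdges G hG r v) := by
  obtain ⟨x, hxe, hex⟩ :=
    exists_mem_treePathEdges_of_mem_edgeSet hG r (mem_edgeSet_of_mem_treePathEdges hG he)
  obtain ⟨y, hyf, hfy⟩ :=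
    exists_mem_treePathEdges_of_mem_edgeSet hG r (mem_edgeSet_of_mem_treePathEdges hG hf)
  rcases treePathEdges_subset_or_subset hG (mem_support_treePath_of_mem hG he hxe)
    (mem_support_treePath_of_mem hG hf hyf) with hxy | hyx
  · exact Or.inr fun v hv =>
      treePathEdges_subset_of_mem_support hG (mem_support_treePath_of_mem hG hv hyf) (hxy hex)
  · exact Or.inl fun v hv =>
      treePathEdges_subset_of_mem_support hG (mem_support_treePath_of_mem hG hv hxe) (hyx hfy)

end TreePath

namespace Equiv.Perm

variable {ι : Type*} {α : Perm ι} {s : Finset ι} {a b : ι}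

theorem IsCycleOn.exists_eq_of_nested (hα : α.IsCycleOn s) (hs : s.Nonempty)
    (A : ι → Finset ι) (hsub : ∀ x ∈ s, A x ⊆ s) (hmem : ∀ x ∈ s, x ∈ A x ∧ α x ∈ A x)
    (hnest : ∀ x ∈ s, ∀ y ∈ s, x ∈ A y → A y ⊆ A x ∨ A x ⊆ A y) :
    ∃ x ∈ s, A x = s := by
  obtain ⟨y, hy, hmax⟩ := s.exists_max_image (fun x => #(A x)) hs
  have hclosed : ∀ x ∈ A y, α x ∈ A y := by
    intro x hx
    have hxs := hsub y hy hx
    rcases hnest x hxs y hy hx with hyx | hxy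
    · rw [eq_of_subset_of_card_le hyx (hmax x hxs)]
      exact (hmem x hxs).2
    · exact hxy (hmem x hxs).2
  refine ⟨y, hy, (hsub y hy).antisymm fun x hx => ?_⟩
  obtain ⟨n, rfl⟩ := hα.exists_pow_eq' s.finite_toSet hy hx
  clear hx
  induction n with
  | zero => exact (hmem y hy).1
  | succ n ih =>
    rw [pow_succ', mul_apply]
    exact hclosed _ ih

variable [DecidableEq ι]

theorem IsCycleOn.mul_swap_insert (hα : α.IsCycleOn s) (ha : a ∈ s) (hb : b ∉ s)
    (hαb : α b = b) : (α * swap a b).IsCycleOn ↑(insert b s) := by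
  have hstep : ∀ x ∈ s, (α * swap a b).SameCycle x (α x) := by
    intro x hx
    by_cases hxa : x = a
    · subst hxa
      exact SameCycle.trans (⟨1, by simp [hαb]⟩ : (α * swap x b).SameCycle x b) ⟨1, by simp⟩
    · exact ⟨1, by simp [swap_apply_of_ne_of_ne hxa (ne_of_mem_of_not_mem hx hb)]⟩
  have hpow : ∀ n : ℕ, (α * swap a b).SameCycle a ((α ^ n) a) := by
    intro n
    induction n with
    | zero => exact SameCycle.refl _ _
    | succ n ih =>
      rw [pow_succ', mul_apply]
      exact ih.trans (hstep _ (hα.1.mapsTo.perm_pow n ha))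
  have hsame : ∀ x ∈ insert b s, (α * swap a b).SameCycle a x := by
    intro x hx
    rcases mem_insert.mp hx with rfl | hx
    · exact ⟨1, by simp [hαb]⟩
    · obtain ⟨n, rfl⟩ := hα.exists_pow_eq' s.finite_toSet ha hx
      exact hpow n
  refine ⟨(α * swap a b).bijOn fun x => ?_, fun x hx y hy => (hsame x hx).symm.trans (hsame y hy)⟩
  have hmem : ∀ y, α y ∈ s ↔ y ∈ s := fun _ => hα.apply_mem_iff
  simp only [coe_insert, Set.mem_insert_iff, mem_coe, mul_apply]
  rcases eq_or_ne x a with rfl | hxa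
  · simp [hαb, ha]
  rcases eq_or_ne x b with rfl | hxb
  · simp [hmem, ha]
  rw [swap_apply_of_ne_of_ne hxa hxb, ← hαb, α.injective.eq_iff, hαb, hmem]

theorem sum_insert_mul_swap {M : Type*} [AddCommMonoid M] (f : ι → ι → M) (ha : a ∈ s)
    (hb : b ∉ s) (hαb : α b = b) :
    ∑ x ∈ insert b s, f x ((α * swap a b) x) + f a (α a) =
      ∑ x ∈ s, f x (α x) + (f a b + f b (α a)) := by
  have hrest : ∑ x ∈ s.erase a, f x ((α * swap a b) x) = ∑ x ∈ s.erase a, f x (α x) :=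
    sum_congr rfl fun x hx => by
      rw [mul_apply, swap_apply_of_ne_of_ne (ne_of_mem_erase hx)
        (ne_of_mem_of_not_mem (mem_of_mem_erase hx) hb)]
  rw [sum_insert hb, ← add_sum_erase s _ ha, ← add_sum_erase s _ ha, hrest]
  simp only [mul_apply, swap_apply_left, swap_apply_right, hαb]
  abel

end Equiv.Perm

theorem Finset.sum_sum_eq_nsmul_sum {ι β M : Type*} [DecidableEq β] [AddCommMonoid M]
    {s : Finset ι} {t : ι → Finset β} {H : Finset β} {k : ℕ} (f : β → M)
    (hsub : ∀ x ∈ s, t x ⊆ H) (hk : ∀ e ∈ H, #{x ∈ s | e ∈ t x} = k) :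
    ∑ x ∈ s, ∑ e ∈ t x, f e = k • ∑ e ∈ H, f e := by
  rw [sum_comm' (t' := H) (s' := fun e => {x ∈ s | e ∈ t x}), smul_sum]
  · exact sum_congr rfl fun e he => by rw [sum_const, hk e he]
  · intro x e
    simp only [mem_filter]
    exact ⟨fun h => ⟨⟨h.1, h.2⟩, hsub x h.1 h.2⟩, fun h => h.1⟩

section Hull

variable {V : Type*} [DecidableEq V] {G : SimpleGraph V} (hG : G.IsTree)

theorem mem_hullEdges {A : Finset V} {e : Sym2 V} :
    e ∈ hullEdges G hG A ↔ ∃ u ∈ A, ∃ v ∈ A, e ∈ treePathEdges G hG u v := by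
  simp [hullEdges]

theorem treePathEdges_subset_hullEdges {A : Finset V} {u v : V} (hu : u ∈ A) (hv : v ∈ A) :
    treePathEdges G hG u v ⊆ hullEdges G hG A :=
  fun _ he => (mem_hullEdges hG).mpr ⟨u, hu, v, hv, he⟩

theorem exists_notMem_treePathEdges_of_mem_hullEdges (r : V) {A : Finset V} {e : Sym2 V}
    (he : e ∈ hullEdges G hG A) : ∃ x ∈ A, e ∉ treePathEdges G hG r x := by
  obtain ⟨u, hu, v, hv, huv⟩ := (mem_hullEdges hG).mp he
  rw [treePathEdges_eq_symmDiff hG r, mem_symmDiff] at huv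
  rcases huv with ⟨-, h⟩ | ⟨-, h⟩
  exacts [⟨v, hv, h⟩, ⟨u, hu, h⟩]

theorem mem_treePathEdges_of_mem_hullEdges_insert {r : V} {A : Finset V} {e : Sym2 V}
    (he : e ∈ hullEdges G hG (insert r A)) (he' : e ∉ hullEdges G hG A) :
    ∀ x ∈ A, e ∈ treePathEdges G hG r x := by
  have hrA : ∃ y ∈ A, e ∈ treePathEdges G hG r y := by
    obtain ⟨u, hu, v, hv, huv⟩ := (mem_hullEdges hG).mp he
    rcases mem_insert.mp hu with rfl | huA <;> rcases mem_insert.mp hv with rfl | hvA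
    · simp [treePathEdges_self] at huv
    · exact ⟨v, hvA, huv⟩
    · exact ⟨u, huA, treePathEdges_comm hG u _ ▸ huv⟩
    · exact absurd (treePathEdges_subset_hullEdges hG huA hvA huv) he'
  obtain ⟨y, hy, hry⟩ := hrA
  intro x hx
  have hyx : e ∉ treePathEdges G hG y x := fun h => he' (treePathEdges_subset_hullEdges hG hy hx h)
  rw [treePathEdges_eq_symmDiff hG r, mem_symmDiff] at hyx
  tauto

end Hull

section Traversal

variable {V ι : Type*} [DecidableEq V] {G : SimpleGraph V} (hG : G.IsTree)

theorem ite_mem_treePathEdges_add_ite_mem_treePathEdges (r u v : V) (e : Sym2 V) :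
    ((if e ∈ treePathEdges G hG u r then 1 else 0) +
        if e ∈ treePathEdges G hG r v then 1 else 0) =
      (if e ∈ treePathEdges G hG u v then 1 else 0) +
        if e ∈ treePathEdges G hG r u ∧ e ∈ treePathEdges G hG r v then 2 else 0 := by
  rw [treePathEdges_comm hG u r, treePathEdges_eq_symmDiff hG r u v]
  by_cases hu : e ∈ treePathEdges G hG r u <;> by_cases hv : e ∈ treePathEdges G hG r v <;>
    simp [mem_symmDiff, hu, hv]

theorem exists_disjoint_hullEdges_treePathEdges_inter {α : Perm ι} {s : Finset ι}
    (hα : α.IsCycleOn s) (hs : s.Nonempty) (i : ι → V) (r : V) :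
    ∃ a ∈ s, Disjoint (hullEdges G hG (s.image i))
      (treePathEdges G hG r (i a) ∩ treePathEdges G hG r (i (α a))) := by
  by_contra! hbad
  simp only [not_disjoint_iff, mem_inter] at hbad
  obtain ⟨v⟩ := hG.connected.nonempty
  have : Nonempty (Sym2 V) := ⟨s(v, v)⟩
  choose! E hE hEa hEαa using hbad
  have hαs : ∀ x ∈ s, α x ∈ s := fun _ => hα.apply_mem_iff.mpr
  obtain ⟨x, hx, hAx⟩ := hα.exists_eq_of_nested hs
    (fun x => {y ∈ s | E x ∈ treePathEdges G hG r (i y)}) (fun x _ => filter_subset _ _)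
    (fun x hx => ⟨mem_filter.mpr ⟨hx, hEa x hx⟩, mem_filter.mpr ⟨hαs x hx, hEαa x hx⟩⟩)
    (fun x hx y hy hxy => by
      rcases forall_mem_treePathEdges_imp_or hG (mem_filter.mp hxy).2 (hEa x hx) with h | h
      exacts [Or.inl (monotone_filter_right _ fun _ _ => h _),
        Or.inr (monotone_filter_right _ fun _ _ => h _)])
  obtain ⟨_, hv, hnot⟩ := exists_notMem_treePathEdges_of_mem_hullEdges hG r (hE x hx)
  obtain ⟨y, hy, rfl⟩ := mem_image.mp hv
  rw [← hAx, mem_filter] at hy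
  exact hnot hy.2

variable [DecidableEq ι]

def CrossesHullEdgesTwice (i : ι → V) (s : Finset ι) (α : Perm ι) : Prop :=
  ∀ e ∈ hullEdges G hG (s.image i), #{x ∈ s | e ∈ treePathEdges G hG (i x) (i (α x))} = 2

/-- Inserting `b` between `a` and `α a` replaces the leg `a → α a` by `a → b → α a`. The old hull
edges are crossed as before because the paths from `b` to `a` and to `α a` share none of them, and
a new hull edge separates `b` from all of `s`, so only the two new legs cross it. -/
theorem CrossesHullEdgesTwice.mul_swap {i : ι → V} {s : Finset ι} {α : Perm ι} {a b : ι}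
    (h : CrossesHullEdgesTwice hG i s α) (hα : α.IsCycleOn s) (ha : a ∈ s) (hb : b ∉ s)
    (hαb : α b = b) (hgood : Disjoint (hullEdges G hG (s.image i))
      (treePathEdges G hG (i b) (i a) ∩ treePathEdges G hG (i b) (i (α a)))) :
    CrossesHullEdgesTwice hG i (insert b s) (α * swap a b) := by
  intro e he
  have hαs : ∀ x ∈ s, α x ∈ s := fun _ => hα.apply_mem_iff.mpr
  have hsum := Perm.sum_insert_mul_swap
    (fun x y => if e ∈ treePathEdges G hG (i x) (i y) then 1 else 0) ha hb hαb
  have hvia := ite_mem_treePathEdges_add_ite_mem_treePathEdges hG (i b) (i a) (i (α a)) e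
  rw [card_filter]
  by_cases hold : e ∈ hullEdges G hG (s.image i)
  · have h2 := h e hold
    rw [card_filter] at h2
    rw [if_neg (mem_inter.not.mp (disjoint_left.mp hgood hold))] at hvia
    omega
  · rw [image_insert] at he
    have hroot := mem_treePathEdges_of_mem_hullEdges_insert hG he hold
    have hzero : ∀ x ∈ s, (if e ∈ treePathEdges G hG (i x) (i (α x)) then 1 else 0) = 0 :=
      fun x hx => if_neg fun hx' => hold <| treePathEdges_subset_hullEdges hG
        (mem_image_of_mem i hx) (mem_image_of_mem i (hαs x hx)) hx'
    rw [sum_eq_zero hzero, hzero a ha] at hsum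
    have hboth : e ∈ treePathEdges G hG (i b) (i a) ∧ e ∈ treePathEdges G hG (i b) (i (α a)) :=
      ⟨hroot _ (mem_image_of_mem i ha), hroot _ (mem_image_of_mem i (hαs a ha))⟩
    rw [hzero a ha, if_pos hboth] at hvia
    omega

theorem exists_isCycleOn_crossesHullEdgesTwice (i : ι → V) (s : Finset ι) :
    ∃ α : Perm ι, α.IsCycleOn s ∧ (∀ x ∉ s, α x = x) ∧ CrossesHullEdgesTwice hG i s α := by
  induction s using Finset.induction_on with
  | empty => exact ⟨1, by simp, fun _ _ => rfl, by simp [CrossesHullEdgesTwice, hullEdges]⟩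
  | insert b s hb ih =>
    obtain ⟨α, hα, hfix, hcross⟩ := ih
    rcases s.eq_empty_or_nonempty with rfl | hs
    · exact ⟨1, by simp, fun _ _ => rfl, by
        simp [CrossesHullEdgesTwice, hullEdges, treePathEdges_self]⟩
    obtain ⟨a, ha, hgood⟩ := exists_disjoint_hullEdges_treePathEdges_inter hG hα hs i (i b)
    have hαb := hfix b hb
    refine ⟨α * swap a b, hα.mul_swap_insert ha hb hαb, fun x hx => ?_,
      hcross.mul_swap hG hα ha hb hαb hgood⟩
    rw [mem_insert, not_or] at hx
    rw [Perm.mul_apply, swap_apply_of_ne_of_ne (ne_of_mem_of_not_mem ha hx.2).symm hx.1,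
      hfix x hx.2]

end Traversal

theorem exists_cycle_sum_eq_two_mul_dissimilarity_general
    {V : Type*} [DecidableEq V] (G : SimpleGraph V) (hG : G.IsTree)
    (ℓ : Sym2 V → ℝ) (m : ℕ) (hm : 2 ≤ m) (i : Fin m → V) :
    ∃ α : Equiv.Perm (Fin m), α.IsCycle ∧ α.support = Finset.univ ∧
      2 * dissim G hG ℓ (Finset.univ.image i) =
        ∑ a : Fin m, treeDist G hG ℓ (i a) (i (α a)) := by
  obtain ⟨α, hα, -, hcross⟩ := exists_isCycleOn_crossesHullEdgesTwice hG i univ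
  rw [coe_univ] at hα
  have hnt : (Set.univ : Set (Fin m)).Nontrivial :=
    Set.nontrivial_univ_iff.mpr (Fin.nontrivial_iff_two_le.mpr hm)
  refine ⟨α, Perm.isCycle_iff_exists_isCycleOn.mpr ⟨_, hnt, hα, fun _ _ => trivial⟩,
    eq_univ_of_forall fun x => Perm.mem_support.mpr (hα.apply_ne hnt (Set.mem_univ x)), ?_⟩
  simp only [dissim, treeDist]
  rw [sum_sum_eq_nsmul_sum ℓ (fun x _ => treePathEdges_subset_hullEdges hG
    (mem_image_of_mem i (mem_univ x)) (mem_image_of_mem i (mem_univ (α x)))) hcross,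
    nsmul_eq_mul, Nat.cast_ofNat]

/-- For `m ≥ 2` distinct leaves of a weighted tree there exists an `m`-cycle `α` of the
symmetric group on `Fin m` such that twice the `m`-dissimilarity equals the sum of the
tree distances between consecutive leaves in the cyclic order determined by `α`. -/
theorem exists_cycle_sum_eq_two_mul_dissimilarity
    {V : Type*} [Fintype V] [DecidableEq V] (G : SimpleGraph V) (hG : G.IsTree)
    (ℓ : Sym2 V → ℝ) (hℓ : ∀ e ∈ G.edgeSet, 0 ≤ ℓ e)
    (m : ℕ) (hm : 2 ≤ m) (i : Fin m → V)
    (hinj : Function.Injective i) (hleaf : ∀ a, IsLeaf G (i a)) :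
    ∃ α : Equiv.Perm (Fin m), α.IsCycle ∧ α.support = Finset.univ ∧
      2 * dissim G hG ℓ (Finset.univ.image i) =
        ∑ a : Fin m, treeDist G hG ℓ (i a) (i (α a)) :=
  exists_cycle_sum_eq_two_mul_dissimilarity_general G hG ℓ m hm i
end

section
/- Let (T, ℓ) be a weighted tree, let m ≥ 2, let S = {s_1, …, s_{m-2}} be a set of m−2 distinct leaves of T, and let i, j, k, l be four distinct leaves of T, none of which lies in S. Then among the three sums d_{S∪{i,j}}(T,ℓ) + d_{S∪{k,l}}(T,ℓ), d_{S∪{i,k}}(T,ℓ) + d_{S∪{j,l}}(T,ℓ), and d_{S∪{i,l}}(T,ℓ) + d_{S∪{j,k}}(T,ℓ) of m-dissimilarities, the maximum is attained at least twice; that is, the m-dissimilarity vector of (T, ℓ) satisfies the tropical three-term Plücker relations. -/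
/-- Among three real numbers, the maximum is attained at least twice: two of them are
equal and greater than or equal to the third. -/
def MaxAttainedTwice (x y z : ℝ) : Prop :=
  (x = y ∧ z ≤ x) ∨ (x = z ∧ y ≤ x) ∨ (y = z ∧ x ≤ y)

set_option linter.unusedSectionVars false
set_option linter.unusedVariables false
set_option maxHeartbeats 1000000

open SimpleGraph

section Aux
variable {V : Type*} [DecidableEq V] {G : SimpleGraph V}

private lemma mem_del_edgeSet {e f : Sym2 V} (hf : f ∈ G.edgeSet) (hne : f ≠ e) :
    f ∈ (G \ fromEdgeSet {e}).edgeSet := by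
  simp only [edgeSet_sdiff, edgeSet_fromEdgeSet, edgeSet_sdiff_sdiff_isDiag, Set.mem_diff,
    Set.mem_singleton_iff]
  exact ⟨hf, hne⟩

private lemma mem_treePathEdges_iff (hG : G.IsTree) (e : Sym2 V) (p q : V) :
    e ∈ treePathEdges G hG p q ↔ ¬ (G \ fromEdgeSet {e}).Reachable p q := by
  rw [treePathEdges, List.mem_toFinset]
  constructor
  · intro he hr
    obtain ⟨w⟩ := hr
    have hw : ∀ f ∈ w.edges, f ∈ G.edgeSet := fun f hf =>
      edgeSet_mono sdiff_le (w.edges_subset_edgeSet hf)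
    have hbp := (w.transfer G hw).bypass_isPath
    have heq := (hG.existsUnique_path p q).choose_spec.2 _ hbp
    rw [← heq] at he
    have he2 : e ∈ w.edges := by
      have := (w.transfer G hw).edges_bypass_subset he
      rwa [Walk.edges_transfer] at this
    have := w.edges_subset_edgeSet he2
    rw [edgeSet_sdiff, edgeSet_fromEdgeSet, edgeSet_sdiff_sdiff_isDiag] at this
    exact this.2 rfl
  · intro h
    by_contra he
    exact h ⟨((hG.existsUnique_path p q).choose).transfer _ fun f hf =>
      mem_del_edgeSet (Walk.edges_subset_edgeSet _ hf) (fun hfe => he (hfe ▸ hf))⟩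

private lemma reach_del_of_mem_support (hG : G.IsTree) {e : Sym2 V} {p q a : V}
    (he : e ∉ treePathEdges G hG p q)
    (ha : a ∈ ((hG.existsUnique_path p q).choose).support) :
    (G \ fromEdgeSet {e}).Reachable p a := by
  rw [treePathEdges, List.mem_toFinset] at he
  exact ⟨(((hG.existsUnique_path p q).choose).takeUntil a ha).transfer _ fun f hf => by
    have hf' := Walk.edges_takeUntil_subset _ ha hf
    exact mem_del_edgeSet (Walk.edges_subset_edgeSet _ hf') (fun hfe => he (hfe ▸ hf'))⟩

private lemma walk_reach_cases (u v : V) {p q : V} (w : G.Walk p q) :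
    (G \ fromEdgeSet {s(u, v)}).Reachable p q ∨
      ((G \ fromEdgeSet {s(u, v)}).Reachable p u ∧ (G \ fromEdgeSet {s(u, v)}).Reachable q v) ∨
      ((G \ fromEdgeSet {s(u, v)}).Reachable p v ∧ (G \ fromEdgeSet {s(u, v)}).Reachable q u) := by
  induction w with
  | nil => exact Or.inl (Reachable.refl _)
  | @cons a b c hadj w ih =>
    by_cases he : s(a, b) = s(u, v)
    · rw [Sym2.eq_iff] at he
      rcases he with ⟨rfl, rfl⟩ | ⟨rfl, rfl⟩
      · rcases ih with h | ⟨h1, h2⟩ | ⟨h1, h2⟩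
        · exact Or.inr (Or.inl ⟨Reachable.refl _, h.symm⟩)
        · exact Or.inr (Or.inl ⟨Reachable.refl _, h2⟩)
        · exact Or.inl h2.symm
      · rcases ih with h | ⟨h1, h2⟩ | ⟨h1, h2⟩
        · exact Or.inr (Or.inr ⟨Reachable.refl _, h.symm⟩)
        · exact Or.inl h2.symm
        · exact Or.inl (h2.trans h1).symm
    · have hadj' : (G \ fromEdgeSet {s(u, v)}).Adj a b := by
        rw [sdiff_adj, fromEdgeSet_adj]
        exact ⟨hadj, fun h => he h.1⟩
      rcases ih with h | ⟨h1, h2⟩ | ⟨h1, h2⟩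
      · exact Or.inl (hadj'.reachable.trans h)
      · exact Or.inr (Or.inl ⟨hadj'.reachable.trans h1, h2⟩)
      · exact Or.inr (Or.inr ⟨hadj'.reachable.trans h1, h2⟩)

/-- `Sp G a b c d` says some edge of `G` splits the tree with `a, b` on one side and
`c, d` on the other. -/
private def Sp (G : SimpleGraph V) (a b c d : V) : Prop :=
  ∃ e : Sym2 V, ¬ (G \ fromEdgeSet {e}).Reachable a c ∧
    (G \ fromEdgeSet {e}).Reachable a b ∧ (G \ fromEdgeSet {e}).Reachable c d

private lemma Sp_swap_right {a b c d : V} (h : Sp G a b c d) : Sp G a b d c := by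
  obtain ⟨e, hac, hab, hcd⟩ := h
  exact ⟨e, fun h => hac (h.trans hcd.symm), hab, hcd.symm⟩

private lemma Sp_excl (hG : G.IsTree) {a b c d : V} (h1 : Sp G a b c d) (h2 : Sp G a c b d) :
    False := by
  obtain ⟨e, hac, hab, hcd⟩ := h1
  obtain ⟨f, hfab, hfac, hfbd⟩ := h2
  have hf1 : f ∈ treePathEdges G hG a b := (mem_treePathEdges_iff hG f a b).mpr hfab
  have hf2 : f ∈ treePathEdges G hG c d := (mem_treePathEdges_iff hG f c d).mpr
    (fun h => hfab (hfac.trans (h.trans hfbd.symm)))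
  have he1 : e ∉ treePathEdges G hG a b := fun h => (mem_treePathEdges_iff hG e a b).mp h hab
  have he2 : e ∉ treePathEdges G hG c d := fun h => (mem_treePathEdges_iff hG e c d).mp h hcd
  induction f using Sym2.ind with
  | _ x y =>
    have hx1 : x ∈ ((hG.existsUnique_path a b).choose).support :=
      Walk.fst_mem_support_of_mem_edges _ (List.mem_toFinset.mp hf1)
    have hx2 : x ∈ ((hG.existsUnique_path c d).choose).support :=
      Walk.fst_mem_support_of_mem_edges _ (List.mem_toFinset.mp hf2)
    exact hac ((reach_del_of_mem_support hG he1 hx1).trans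
      (reach_del_of_mem_support hG he2 hx2).symm)

private def bInd (sp sn a b : Bool) : ℕ :=
  if ((a || b || sp) && (!a || !b || sn)) then 1 else 0

private lemma bInd_key : ∀ sp sn ci cj ck cl : Bool,
    (ci = ck → cj = cl → ci = cj) → (ci = cl → cj = ck → ci = cj) →
    (bInd sp sn ci ck + bInd sp sn cj cl = bInd sp sn ci cl + bInd sp sn cj ck ∧
     bInd sp sn ci cj + bInd sp sn ck cl ≤ bInd sp sn ci ck + bInd sp sn cj cl) := by decide

private lemma pointwise (hG : G.IsTree) (ℓ : Sym2 V → ℝ) (S : Finset V) (i j k l : V)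
    (e : Sym2 V) (hle : 0 ≤ ℓ e)
    (h1 : ¬ Sp G i k j l) (h2 : ¬ Sp G i l j k) :
    ((if e ∈ hullEdges G hG (insert i (insert k S)) then ℓ e else 0) +
      (if e ∈ hullEdges G hG (insert j (insert l S)) then ℓ e else 0) =
     (if e ∈ hullEdges G hG (insert i (insert l S)) then ℓ e else 0) +
      (if e ∈ hullEdges G hG (insert j (insert k S)) then ℓ e else 0)) ∧
    ((if e ∈ hullEdges G hG (insert i (insert j S)) then ℓ e else 0) +
      (if e ∈ hullEdges G hG (insert k (insert l S)) then ℓ e else 0) ≤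
     (if e ∈ hullEdges G hG (insert i (insert k S)) then ℓ e else 0) +
      (if e ∈ hullEdges G hG (insert j (insert l S)) then ℓ e else 0)) := by
  classical
  induction e using Sym2.ind with
  | _ u v =>
    set G' := G \ fromEdgeSet {s(u, v)} with hG'
    have tot : ∀ p, G'.Reachable p u ∨ G'.Reachable p v := fun p => by
      obtain ⟨w⟩ := hG.1.preconnected p u
      rcases walk_reach_cases u v w with h | ⟨ha, _⟩ | ⟨ha, _⟩
      · exact Or.inl h
      · exact Or.inl ha
      · exact Or.inr ha
    set c : V → Bool := fun p => decide (G'.Reachable p u) with hc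
    have hcd : ∀ p, c p = true ↔ G'.Reachable p u := fun p => by simp [hc]
    have hRc : ∀ p q, G'.Reachable p q ↔ c p = c q := by
      intro p q
      constructor
      · intro h
        simp only [hc, decide_eq_decide]
        exact ⟨fun hh => h.symm.trans hh, fun hh => h.trans hh⟩
      · intro h
        rcases tot p with hp | hp <;> rcases tot q with hq | hq
        · exact hp.trans hq.symm
        · have : G'.Reachable q u := (hcd q).mp (h ▸ (hcd p).mpr hp)
          exact hp.trans this.symm
        · have : G'.Reachable p u := (hcd p).mp (h.symm ▸ (hcd q).mpr hq)
          exact this.trans hq.symm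
        · exact hp.trans hq.symm
    have hsep : ∀ p q, (s(u, v) ∈ treePathEdges G hG p q ↔ ¬ c p = c q) := fun p q => by
      rw [mem_treePathEdges_iff hG, ← hG', hRc]
    have hex : ∀ A : Finset V, (s(u, v) ∈ hullEdges G hG A ↔
        ((∃ p ∈ A, c p = true) ∧ (∃ p ∈ A, c p = false))) := by
      intro A
      rw [hullEdges]
      simp only [Finset.mem_biUnion]
      constructor
      · rintro ⟨p, hp, q, hq, hpq⟩
        rw [hsep] at hpq
        cases hcp : c p
        · cases hcq : c q
          · exact absurd (hcp.trans hcq.symm) hpq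
          · exact ⟨⟨q, hq, hcq⟩, ⟨p, hp, hcp⟩⟩
        · cases hcq : c q
          · exact ⟨⟨p, hp, hcp⟩, ⟨q, hq, hcq⟩⟩
          · exact absurd (hcp.trans hcq.symm) hpq
      · rintro ⟨⟨p, hp, hcp⟩, ⟨q, hq, hcq⟩⟩
        exact ⟨p, hp, q, hq, (hsep p q).mpr (by rw [hcp, hcq]; simp)⟩
    set sp : Bool := decide (∃ x ∈ S, c x = true) with hsp
    set sn : Bool := decide (∃ x ∈ S, c x = false) with hsn
    have hform : ∀ p q : V,
        (if s(u, v) ∈ hullEdges G hG (insert p (insert q S)) then ℓ s(u, v) else 0) =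
          (bInd sp sn (c p) (c q) : ℝ) * ℓ s(u, v) := by
      intro p q
      have hT : (c p || c q || sp) = true ↔ (∃ x ∈ insert p (insert q S), c x = true) := by
        simp only [Bool.or_eq_true, hsp, decide_eq_true_eq, Finset.mem_insert]
        constructor
        · rintro ((h | h) | ⟨x, hx, hcx⟩)
          · exact ⟨p, Or.inl rfl, h⟩
          · exact ⟨q, Or.inr (Or.inl rfl), h⟩
          · exact ⟨x, Or.inr (Or.inr hx), hcx⟩
        · rintro ⟨x, (rfl | rfl | hx), hcx⟩
          · exact Or.inl (Or.inl hcx)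
          · exact Or.inl (Or.inr hcx)
          · exact Or.inr ⟨x, hx, hcx⟩
      have hF : (!(c p) || !(c q) || sn) = true ↔ (∃ x ∈ insert p (insert q S), c x = false) := by
        simp only [Bool.or_eq_true, Bool.not_eq_true', hsn, decide_eq_true_eq,
          Finset.mem_insert]
        constructor
        · rintro ((h | h) | ⟨x, hx, hcx⟩)
          · exact ⟨p, Or.inl rfl, h⟩
          · exact ⟨q, Or.inr (Or.inl rfl), h⟩
          · exact ⟨x, Or.inr (Or.inr hx), hcx⟩
        · rintro ⟨x, (rfl | rfl | hx), hcx⟩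
          · exact Or.inl (Or.inl hcx)
          · exact Or.inl (Or.inr hcx)
          · exact Or.inr ⟨x, hx, hcx⟩
      have hmem : s(u, v) ∈ hullEdges G hG (insert p (insert q S)) ↔
          ((c p || c q || sp) && (!(c p) || !(c q) || sn)) = true := by
        rw [hex, Bool.and_eq_true, hT, hF]
      rw [bInd]
      by_cases hb : ((c p || c q || sp) && (!(c p) || !(c q) || sn)) = true
      · rw [if_pos hb, if_pos (hmem.mpr hb), Nat.cast_one, one_mul]
      · rw [if_neg hb, if_neg (fun hh => hb (hmem.mp hh)), Nat.cast_zero, zero_mul]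
    have h1' : c i = c k → c j = c l → c i = c j := by
      intro hik hjl
      by_contra hij
      exact h1 ⟨s(u, v), fun h => hij ((hRc i j).mp h), (hRc i k).mpr hik, (hRc j l).mpr hjl⟩
    have h2' : c i = c l → c j = c k → c i = c j := by
      intro hil hjk
      by_contra hij
      exact h2 ⟨s(u, v), fun h => hij ((hRc i j).mp h), (hRc i l).mpr hil, (hRc j k).mpr hjk⟩
    obtain ⟨heq, hle'⟩ := bInd_key sp sn (c i) (c j) (c k) (c l) h1' h2'
    rw [hform i k, hform j l, hform i l, hform j k, hform i j, hform k l]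
    constructor
    · rw [← add_mul, ← add_mul, ← Nat.cast_add, ← Nat.cast_add, heq]
    · rw [← add_mul, ← add_mul, ← Nat.cast_add, ← Nat.cast_add]
      exact mul_le_mul_of_nonneg_right (by exact_mod_cast hle') hle

private lemma master [Fintype V] (hG : G.IsTree) (ℓ : Sym2 V → ℝ)
    (hℓ : ∀ e ∈ G.edgeSet, 0 ≤ ℓ e) (S : Finset V) (i j k l : V)
    (h1 : ¬ Sp G i k j l) (h2 : ¬ Sp G i l j k) :
    (dissim G hG ℓ (insert i (insert k S)) + dissim G hG ℓ (insert j (insert l S)) =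
      dissim G hG ℓ (insert i (insert l S)) + dissim G hG ℓ (insert j (insert k S))) ∧
    (dissim G hG ℓ (insert i (insert j S)) + dissim G hG ℓ (insert k (insert l S)) ≤
      dissim G hG ℓ (insert i (insert k S)) + dissim G hG ℓ (insert j (insert l S))) := by
  classical
  have hsub : ∀ A : Finset V, hullEdges G hG A ⊆ G.edgeFinset := by
    intro A e he
    rw [hullEdges] at he
    simp only [Finset.mem_biUnion] at he
    obtain ⟨p, _, q, _, hpq⟩ := he
    rw [treePathEdges, List.mem_toFinset] at hpq
    rw [mem_edgeFinset]
    exact Walk.edges_subset_edgeSet _ hpq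
  have hdis : ∀ A : Finset V, dissim G hG ℓ A =
      ∑ e ∈ G.edgeFinset, (if e ∈ hullEdges G hG A then ℓ e else 0) := by
    intro A
    rw [dissim, Finset.sum_ite_mem, Finset.inter_eq_right.mpr (hsub A)]
  simp only [hdis, ← Finset.sum_add_distrib]
  constructor
  · exact Finset.sum_congr rfl fun e he =>
      (pointwise hG ℓ S i j k l e (hℓ e (mem_edgeFinset.mp he)) h1 h2).1
  · exact Finset.sum_le_sum fun e he =>
      (pointwise hG ℓ S i j k l e (hℓ e (mem_edgeFinset.mp he)) h1 h2).2

end Aux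

/-- The tropical three-term Plücker relations for `m`-dissimilarity vectors: for a set `S`
of `m - 2` distinct leaves of a weighted tree and four further distinct leaves
`i, j, k, l` not in `S`, the maximum of the three sums
`d (S∪{i,j}) + d (S∪{k,l})`, `d (S∪{i,k}) + d (S∪{j,l})`, `d (S∪{i,l}) + d (S∪{j,k})`
of `m`-dissimilarities is attained at least twice. -/
theorem dissimilarity_tropical_plucker
    {V : Type*} [Fintype V] [DecidableEq V] (G : SimpleGraph V) (hG : G.IsTree)
    (ℓ : Sym2 V → ℝ) (hℓ : ∀ e ∈ G.edgeSet, 0 ≤ ℓ e)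
    (m : ℕ) (hm : 2 ≤ m)
    (S : Finset V) (hScard : S.card = m - 2) (hSleaf : ∀ v ∈ S, IsLeaf G v)
    (i j k l : V)
    (hij : i ≠ j) (hik : i ≠ k) (hil : i ≠ l) (hjk : j ≠ k) (hjl : j ≠ l) (hkl : k ≠ l)
    (hiS : i ∉ S) (hjS : j ∉ S) (hkS : k ∉ S) (hlS : l ∉ S)
    (hi : IsLeaf G i) (hj : IsLeaf G j) (hk : IsLeaf G k) (hl : IsLeaf G l) :
    MaxAttainedTwice
      (dissim G hG ℓ (insert i (insert j S)) + dissim G hG ℓ (insert k (insert l S)))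
      (dissim G hG ℓ (insert i (insert k S)) + dissim G hG ℓ (insert j (insert l S)))
      (dissim G hG ℓ (insert i (insert l S)) + dissim G hG ℓ (insert j (insert k S))) := by
  classical
  by_cases q1 : Sp G i k j l
  · have n1 : ¬ Sp G i j k l := fun h => Sp_excl hG q1 h
    have n2 : ¬ Sp G i l k j := fun h => Sp_excl hG (Sp_swap_right q1) h
    obtain ⟨heq, hle⟩ := master hG ℓ hℓ S i k j l n1 n2
    rw [Finset.insert_comm k j] at heq
    exact Or.inr (Or.inl ⟨heq, hle⟩)
  · by_cases q2 : Sp G i l j k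
    · have n1 : ¬ Sp G i j l k := fun h => Sp_excl hG q2 h
      have n2 : ¬ Sp G i k l j := fun h => q1 (Sp_swap_right h)
      obtain ⟨heq, hle⟩ := master hG ℓ hℓ S i l j k n1 n2
      rw [Finset.insert_comm l k] at heq hle
      rw [Finset.insert_comm l j] at heq
      exact Or.inl ⟨heq, hle⟩
    · obtain ⟨heq, hle⟩ := master hG ℓ hℓ S i j k l q1 q2
      exact Or.inr (Or.inr ⟨heq, hle⟩)
end
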